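/- Let p_1,\u2026,p_m, q_1,\u2026,q_m be indeterminates and define \u03c6(z) = (1 + \u2211_j p_j z) \u220f_{i=1}^m (1 - (q_i - r_{i-1})z) / \u220f_{i=1}^m (1 - (q_i - r_i)z), with r_i = p_1+\u22ef+p_i, viewed as a formal power series in z. Define R_k = -(1/(k-1))[y^k]\u03c6(y)^{k-1} for k \u2265 2. Then for every k \u2265 1, the polynomial (-1)^k R_{k+1}(p_1,\u2026,p_m; -q_1,\u2026,-q_m), i.e. (-1)^k R_{k+1} with each q_i replaced by -q_i, has all coefficients nonnegative as a polynomial in p_1,\u2026,p_m,q_1,\u2026,q_m. -/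

import Mathlib

/-- The polynomial ring `ℚ[p_1,…,p_m,q_1,…,q_m]`. -/
abbrev PQRing (m : ℕ) : Type := MvPolynomial (Fin m ⊕ Fin m) ℚ

noncomputable def pvar {m : ℕ} (i : Fin m) : PQRing m := MvPolynomial.X (Sum.inl i)
noncomputable def qvar {m : ℕ} (i : Fin m) : PQRing m := MvPolynomial.X (Sum.inr i)

/-- `r_i = p_1 + ⋯ + p_i` (with `r_0 = 0`). -/
noncomputable def rsum {m : ℕ} (i : ℕ) : PQRing m :=
  ∑ j : Fin m, if (j : ℕ) < i then pvar j else 0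

/-- The geometric series `1/(1 - a z) = ∑_{n ≥ 0} a^n z^n`. -/
noncomputable def geom {A : Type*} [CommRing A] (a : A) : PowerSeries A :=
  PowerSeries.mk fun n => a ^ n

/-- `φ(z) = (1 + ∑_j p_j z) ∏_{i=1}^m (1 - (q_i - r_{i-1})z) / ∏_{i=1}^m (1 - (q_i - r_i)z)`
as a formal power series (0-indexed: `r_{i-1} ↦ rsum i`, `r_i ↦ rsum (i+1)`). -/
noncomputable def phi11 (m : ℕ) : PowerSeries (PQRing m) :=
  (1 + PowerSeries.C (∑ j : Fin m, pvar j) * PowerSeries.X) *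
    ∏ i : Fin m,
      ((1 - PowerSeries.C (qvar i - rsum (i : ℕ)) * PowerSeries.X) *
        geom (qvar i - rsum ((i : ℕ) + 1)))

/-- `R_{k+1} = -(1/k) [y^{k+1}] φ(y)^k`. -/
noncomputable def Rcoeff (m k : ℕ) : PQRing m :=
  (-(1 / (k : ℚ))) • PowerSeries.coeff (k + 1) ((phi11 m) ^ k)

/-- The substitution `q_i ↦ -q_i` (fixing the `p`'s). -/
noncomputable def negq (m : ℕ) : PQRing m →ₐ[ℚ] PQRing m :=
  MvPolynomial.aeval (Sum.elim (fun i => MvPolynomial.X (Sum.inl i))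
    (fun i => - MvPolynomial.X (Sum.inr i)))

/-!
Replacing `q_i` by `-q_i` and `z` by `-z` turns `φ` into
`F(z) = (1 - r_m z) ∏ᵢ (1 - (q_i + r_{i-1}) z) / (1 - (q_i + r_i) z)`, and this product telescopes
into `∏ᵢ (1 + p_i q_i z² / ((1 - r_{i-1} z) (1 - (q_i + r_i) z)))`. Every factor, hence every power
of `F`, has coefficients that are polynomials with nonnegative coefficients, and the signs combine
to `(-1)^k R_{k+1}(p; -q) = (1/k) [z^{k+1}] F(z)^k`.
-/

open PowerSeries

section Geom

variable {A : Type*} [CommRing A]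

theorem coeff_geom (a : A) (n : ℕ) : coeff n (geom a) = a ^ n := by
  simp [geom]

theorem one_sub_C_mul_X_mul_geom (a : A) : (1 - C a * X) * geom a = 1 := by
  ext n
  rcases n with _ | n
  · simp [geom]
  · simp [sub_mul, mul_assoc, coeff_geom, pow_succ', coeff_succ_X_mul]

theorem map_geom {B : Type*} [CommRing B] (f : A →+* B) (a : A) :
    PowerSeries.map f (geom a) = geom (f a) := by
  ext n
  simp [coeff_geom]

theorem rescale_geom (a b : A) : rescale a (geom b) = geom (a * b) := by
  ext n
  simp [coeff_geom, coeff_rescale, mul_pow]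

theorem rescale_C (a b : A) : rescale a (C b) = C b := by
  ext n
  rcases n with _ | n <;> simp [coeff_rescale, coeff_C]

/-- As rational functions: `(1 - r' z) (1 - (q + r) z) / (1 - (q + r') z)`
`= (1 + (r' - r) q z² / ((1 - r z) (1 - (q + r') z))) (1 - r z)`. -/
theorem one_sub_mul_geom_factor_eq (r r' q : A) :
    (1 - C r' * X) * ((1 - C (q + r) * X) * geom (q + r')) =
      (1 + C ((r' - r) * q) * X ^ 2 * geom r * geom (q + r')) * (1 - C r * X) := by
  have hu := one_sub_C_mul_X_mul_geom (q + r')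
  have hv := one_sub_C_mul_X_mul_geom r
  simp only [map_add, map_sub, map_mul] at hu hv ⊢
  linear_combination (1 - C r * X) * hu - (C r' - C r) * C q * X ^ 2 * geom (q + r') * hv

theorem one_sub_mul_prod_geom_eq_prod {n : ℕ} (ρ : ℕ → A) (θ : Fin n → A) (hρ : ρ 0 = 0) :
    (1 - C (ρ n) * X) * ∏ i : Fin n, ((1 - C (θ i + ρ i) * X) * geom (θ i + ρ (i + 1))) =
      ∏ i : Fin n,
        (1 + C ((ρ (i + 1) - ρ i) * θ i) * X ^ 2 * geom (ρ i) * geom (θ i + ρ (i + 1))) := by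
  induction n with
  | zero => simp [hρ]
  | succ n ih =>
    rw [Fin.prod_univ_castSucc, Fin.prod_univ_castSucc]
    simp only [Fin.val_castSucc, Fin.val_last]
    rw [← ih (fun i => θ i.castSucc), mul_right_comm (1 - C (ρ n) * X),
      mul_comm (1 - C (ρ n) * X), ← one_sub_mul_geom_factor_eq]
    ring

end Geom

namespace MvPolynomial

variable (σ R : Type*) [CommSemiring R] [PartialOrder R] [IsOrderedRing R]

def nonnegCoeffs : Subsemiring (MvPolynomial σ R) where
  carrier := {P | ∀ d, 0 ≤ P.coeff d}
  mul_mem' {P Q} hP hQ d := by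
    classical
    rw [coeff_mul]
    exact Finset.sum_nonneg fun x _ => mul_nonneg (hP x.1) (hQ x.2)
  one_mem' d := by
    classical
    rw [coeff_one]
    split_ifs <;> simp
  add_mem' {P Q} hP hQ d := by
    rw [coeff_add]
    exact add_nonneg (hP d) (hQ d)
  zero_mem' d := by simp

variable {σ R}

theorem X_mem_nonnegCoeffs (s : σ) : X s ∈ nonnegCoeffs σ R := fun d => by
  classical
  rw [coeff_X]
  split_ifs <;> simp

end MvPolynomial

namespace PowerSeries

variable {R : Type*} [CommSemiring R] (T : Subsemiring R)

def coeffsIn : Subsemiring R⟦X⟧ where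
  carrier := {f | ∀ n, coeff n f ∈ T}
  mul_mem' {f g} hf hg n := by
    rw [coeff_mul]
    exact sum_mem fun x _ => mul_mem (hf x.1) (hg x.2)
  one_mem' n := by
    rw [coeff_one]
    split_ifs
    exacts [one_mem T, zero_mem T]
  add_mem' {f g} hf hg n := by
    rw [map_add]
    exact add_mem (hf n) (hg n)
  zero_mem' n := by simp

variable {T}

theorem C_mem_coeffsIn {a : R} (ha : a ∈ T) : C a ∈ coeffsIn T := fun n => by
  rw [coeff_C]
  split_ifs
  exacts [ha, zero_mem T]

theorem X_mem_coeffsIn : X ∈ coeffsIn T := fun n => by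
  rw [coeff_X]
  split_ifs
  exacts [one_mem T, zero_mem T]

theorem geom_mem_coeffsIn {A : Type*} [CommRing A] {T : Subsemiring A} {a : A} (ha : a ∈ T) :
    geom a ∈ coeffsIn T := fun n => by
  rw [coeff_geom]
  exact pow_mem ha n

end PowerSeries

section PQ

variable {m : ℕ}

@[simp]
theorem negq_pvar (i : Fin m) : negq m (pvar i) = pvar i := by
  simp [negq, pvar]

@[simp]
theorem negq_qvar (i : Fin m) : negq m (qvar i) = -qvar i := by
  simp [negq, qvar]

@[simp]
theorem negq_rsum (i : ℕ) : negq m (rsum i) = rsum i := by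
  simp [rsum, apply_ite]

@[simp]
theorem rsum_zero : (rsum 0 : PQRing m) = 0 := by
  simp [rsum]

theorem rsum_self : (rsum m : PQRing m) = ∑ j : Fin m, pvar j :=
  Finset.sum_congr rfl fun j _ => if_pos j.isLt

theorem rsum_succ (i : Fin m) : (rsum (i + 1) : PQRing m) = rsum i + pvar i := by
  have hsplit (j : Fin m) : (if (j : ℕ) < i + 1 then pvar j else 0) =
      (if (j : ℕ) < i then pvar j else 0) + (if j = i then pvar j else 0) := by
    rcases lt_trichotomy j i with h | rfl | h
    · simp [h, h.ne, Nat.lt_succ_of_lt h]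
    · simp
    · simp [h.ne', not_lt.2 h.le, show ¬ (j : ℕ) < i + 1 by omega]
  simp only [rsum, hsplit, Finset.sum_add_distrib, Finset.sum_ite_eq', Finset.mem_univ, if_true]

theorem pvar_mem_nonnegCoeffs (i : Fin m) : pvar i ∈ MvPolynomial.nonnegCoeffs (Fin m ⊕ Fin m) ℚ :=
  MvPolynomial.X_mem_nonnegCoeffs _

theorem qvar_mem_nonnegCoeffs (i : Fin m) : qvar i ∈ MvPolynomial.nonnegCoeffs (Fin m ⊕ Fin m) ℚ :=
  MvPolynomial.X_mem_nonnegCoeffs _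

theorem rsum_mem_nonnegCoeffs (i : ℕ) : rsum i ∈ MvPolynomial.nonnegCoeffs (Fin m ⊕ Fin m) ℚ :=
  sum_mem fun j _ => by
    split_ifs
    exacts [pvar_mem_nonnegCoeffs j, zero_mem _]

noncomputable def phi11Neg (m : ℕ) : PowerSeries (PQRing m) :=
  rescale (-1) (PowerSeries.map (negq m : PQRing m →+* PQRing m) (phi11 m))

theorem phi11Neg_eq_prod : phi11Neg m = ∏ i : Fin m,
    (1 + C (pvar i * qvar i) * X ^ 2 * geom (rsum i) * geom (qvar i + rsum (i + 1))) := by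
  have hreflect : phi11Neg m = (1 - C (rsum m) * X) *
      ∏ i : Fin m, ((1 - C (qvar i + rsum i) * X) * geom (qvar i + rsum (i + 1))) := by
    rw [phi11Neg, phi11, ← rsum_self]
    simp only [map_mul, map_add, map_sub, map_one, map_neg, map_prod,
      PowerSeries.map_C, PowerSeries.map_X, map_geom, rescale_geom, rescale_C, rescale_neg_one_X,
      RingHom.coe_coe, negq_qvar, negq_rsum]
    refine congrArg₂ (· * ·) (by ring) (Finset.prod_congr rfl fun i _ => ?_)
    rw [show -1 * (-qvar i - rsum (i + 1)) = qvar i + rsum (i + 1) by ring]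
    ring
  rw [hreflect, one_sub_mul_prod_geom_eq_prod rsum qvar rsum_zero]
  simp [rsum_succ]

theorem phi11Neg_mem_coeffsIn :
    phi11Neg m ∈ PowerSeries.coeffsIn (MvPolynomial.nonnegCoeffs (Fin m ⊕ Fin m) ℚ) := by
  rw [phi11Neg_eq_prod]
  refine prod_mem fun i _ => add_mem (one_mem _) (mul_mem (mul_mem (mul_mem ?_ ?_) ?_) ?_)
  · exact C_mem_coeffsIn (mul_mem (pvar_mem_nonnegCoeffs i) (qvar_mem_nonnegCoeffs i))
  · exact pow_mem X_mem_coeffsIn 2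
  · exact geom_mem_coeffsIn (rsum_mem_nonnegCoeffs i)
  · exact geom_mem_coeffsIn (add_mem (qvar_mem_nonnegCoeffs i) (rsum_mem_nonnegCoeffs _))

theorem neg_one_pow_smul_negq_Rcoeff (k : ℕ) :
    (-1 : ℚ) ^ k • negq m (Rcoeff m k) = (1 / (k : ℚ)) • coeff (k + 1) (phi11Neg m ^ k) := by
  rw [phi11Neg, ← map_pow, ← map_pow, coeff_rescale, coeff_map, Rcoeff, map_smul, RingHom.coe_coe,
    ← map_one (algebraMap ℚ (PQRing m)), ← map_neg, ← map_pow, ← Algebra.smul_def, smul_smul,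
    smul_smul]
  congr 1
  ring

end PQ

theorem top_terms_nonneg_general (m : ℕ) (k : ℕ) :
    ∀ d, 0 ≤ MvPolynomial.coeff d (((-1 : ℚ) ^ k) • negq m (Rcoeff m k)) := by
  intro d
  rw [neg_one_pow_smul_negq_Rcoeff, MvPolynomial.coeff_smul]
  exact mul_nonneg (by positivity) (pow_mem phi11Neg_mem_coeffsIn k (k + 1) d)

/-- For every `k ≥ 1`, the polynomial
`(-1)^k R_{k+1}(p_1,…,p_m; -q_1,…,-q_m)` has all coefficients nonnegative. -/
theorem top_terms_nonneg (m : ℕ) (k : ℕ) (hk : 1 ≤ k) :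
    ∀ d, 0 ≤ MvPolynomial.coeff d (((-1 : ℚ) ^ k) • negq m (Rcoeff m k)) :=
  top_terms_nonneg_general m k
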